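/- Let R be a commutative ring, n ≥ 2 an even integer, and f, g ∈ R[x] of degree < n. For k = n/2 − 1, the k-th coefficient of the product of f and g in R[x]/(x^n − x^{n/2} + 1) is h_{n/2−1} = a_{n/2−1} − a_{3n/2−1}. -/

import Mathlib

/-!
Write `f * g = r + P * q` with `P = Xⁿ - X^{n/2} + 1` and `r` the remainder. Since
`deg (f * g) ≤ 2n - 2`, the quotient has degree at most `n - 2`, so `P * q` has coefficient
`q_{n/2-1}` both in degree `n/2 - 1` and in degree `n + n/2 - 1`, where `r` vanishes;
subtracting the two coefficient equations eliminates `q`.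
-/

open Polynomial

/-- `a_d = Σ_{i+j=d, 0 ≤ i,j ≤ n−1} f_i g_j`. -/
def convCoeff {R : Type*} [CommRing R] (n : ℕ) (f g : Polynomial R) (d : ℕ) : R :=
  ∑ i ∈ Finset.range n, ∑ j ∈ Finset.range n,
    if i + j = d then f.coeff i * g.coeff j else 0

namespace Polynomial

variable {R : Type*} [CommRing R]

theorem natDegree_lt_of_degree_lt {p : R[X]} {n : ℕ} (hn : 0 < n) (h : p.degree < n) :
    p.natDegree < n := by
  rcases eq_or_ne p 0 with rfl | hp
  · simpa
  · exact (natDegree_lt_iff_degree_lt hp).mpr h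

section Trinomial

variable {m n : ℕ}

theorem X_pow_sub_X_pow_add_one_eq_X_pow_sub :
    ((X : R[X]) ^ n - X ^ m + 1) = X ^ n - (X ^ m - 1) := by
  ring

theorem degree_X_pow_sub_one_lt (hmn : m < n) : ((X : R[X]) ^ m - 1).degree < n :=
  (degree_sub_le _ _).trans_lt (max_lt ((degree_X_pow_le m).trans_lt (by exact_mod_cast hmn))
    (degree_one_le.trans_lt (by exact_mod_cast hmn.pos)))

theorem monic_X_pow_sub_X_pow_add_one (hmn : m < n) : ((X : R[X]) ^ n - X ^ m + 1).Monic := by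
  rw [X_pow_sub_X_pow_add_one_eq_X_pow_sub]
  exact monic_X_pow_sub (degree_X_pow_sub_one_lt hmn)

theorem natDegree_X_pow_sub_X_pow_add_one [Nontrivial R] (hmn : m < n) :
    ((X : R[X]) ^ n - X ^ m + 1).natDegree = n := by
  refine natDegree_eq_of_degree_eq_some ?_
  rw [X_pow_sub_X_pow_add_one_eq_X_pow_sub, degree_sub_eq_left_of_degree_lt, degree_X_pow]
  rw [degree_X_pow]
  exact degree_X_pow_sub_one_lt hmn

theorem coeff_X_pow_sub_X_pow_add_one_mul (q : R[X]) (d : ℕ) :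
    ((X ^ n - X ^ m + 1) * q).coeff d =
      (if n ≤ d then q.coeff (d - n) else 0) - (if m ≤ d then q.coeff (d - m) else 0) +
        q.coeff d := by
  rw [add_mul, sub_mul, one_mul, coeff_add, coeff_sub, coeff_X_pow_mul', coeff_X_pow_mul']

theorem coeff_modByMonic_X_pow_sub_X_pow_add_one (hm : 0 < m) (hmn : m < n) {p : R[X]}
    (hp : p.natDegree + 1 < 2 * n) :
    (p %ₘ (X ^ n - X ^ m + 1)).coeff (m - 1) = p.coeff (m - 1) - p.coeff (n + m - 1) := by
  nontriviality R
  set P : R[X] := X ^ n - X ^ m + 1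
  have hP : P.Monic := monic_X_pow_sub_X_pow_add_one hmn
  have hPdeg : P.natDegree = n := natDegree_X_pow_sub_X_pow_add_one hmn
  have hq : ∀ e, n - 1 ≤ e → (p /ₘ P).coeff e = 0 := fun e he ↦
    coeff_eq_zero_of_natDegree_lt (by rw [natDegree_divByMonic p hP, hPdeg]; omega)
  have hr : (p %ₘ P).coeff (n + m - 1) = 0 := by
    have hP1 : P ≠ 1 := fun h ↦ by simp [h] at hPdeg; omega
    exact coeff_eq_zero_of_natDegree_lt ((natDegree_modByMonic_lt p hP hP1).trans_le (by omega))
  have hcoeff : ∀ d, p.coeff d = (p %ₘ P).coeff d + (P * (p /ₘ P)).coeff d := fun d ↦ by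
    rw [← coeff_add, modByMonic_add_div]
  rw [hcoeff (m - 1), hcoeff (n + m - 1), coeff_X_pow_sub_X_pow_add_one_mul,
    coeff_X_pow_sub_X_pow_add_one_mul, if_neg (by omega), if_neg (by omega), if_pos (by omega),
    if_pos (by omega), hr, hq (n + m - 1 - m) (by omega), hq (n + m - 1) (by omega),
    show n + m - 1 - n = m - 1 by omega]
  ring

end Trinomial

end Polynomial

theorem convCoeff_eq_coeff_mul {R : Type*} [CommRing R] {n : ℕ} {f g : R[X]}
    (hf : f.natDegree < n) (hg : g.natDegree < n) (d : ℕ) :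
    convCoeff n f g d = (f * g).coeff d := by
  conv_rhs => rw [f.as_sum_range' n hf, g.as_sum_range' n hg]
  simp only [convCoeff, Finset.sum_mul_sum, finsetSum_coeff, monomial_mul_monomial, coeff_monomial]

theorem coeff_mul_mod_mid_general {R : Type*} [CommRing R] (n : ℕ) (hn : 2 ≤ n)
    (f g : Polynomial R) (hf : f.degree < n) (hg : g.degree < n) :
    ((f * g) %ₘ ((X : Polynomial R) ^ n - X ^ (n / 2) + 1)).coeff (n / 2 - 1)
      = convCoeff n f g (n / 2 - 1) - convCoeff n f g (n + n / 2 - 1) := by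
  have hf' : f.natDegree < n := natDegree_lt_of_degree_lt (by omega) hf
  have hg' : g.natDegree < n := natDegree_lt_of_degree_lt (by omega) hg
  have hfg : (f * g).natDegree + 1 < 2 * n := by
    have := natDegree_mul_le (p := f) (q := g)
    omega
  rw [convCoeff_eq_coeff_mul hf' hg', convCoeff_eq_coeff_mul hf' hg']
  exact coeff_modByMonic_X_pow_sub_X_pow_add_one (by omega) (by omega) hfg

/-- For `k = n/2 − 1`, the `k`-th coefficient of the product of `f` and `g` in
`R[x]/(xⁿ − x^{n/2} + 1)` is `h_{n/2−1} = a_{n/2−1} − a_{3n/2−1}`. -/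
theorem coeff_mul_mod_mid {R : Type*} [CommRing R] (n : ℕ) (hn : 2 ≤ n) (hne : Even n)
    (f g : Polynomial R) (hf : f.degree < n) (hg : g.degree < n) :
    ((f * g) %ₘ ((X : Polynomial R) ^ n - X ^ (n / 2) + 1)).coeff (n / 2 - 1)
      = convCoeff n f g (n / 2 - 1) - convCoeff n f g (n + n / 2 - 1) :=
  coeff_mul_mod_mid_general n hn f g hf hg
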